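/- On ℝ^{2n+1} (n ≥ 2) with coordinates (x^α, y_α, z) and frame e_α = ∂_{x^α}, e_{n+α} = −f∂_{x^α} + ∂_{y_α} − 2x^α ∂_z, e_{2n+1} = ∂_z (f an arbitrary smooth function), the structure defined by φe_α = −e_α, φe_{n+α} = e_{n+α}, φe_{2n+1} = 0, ξ = e_{2n+1}, η = 2Σ x^ω dy_ω + dz, and g(e_α, e_{n+α}) = g(e_{n+α}, e_α) = g(e_{2n+1}, e_{2n+1}) = 1 (other pairings zero) is a paracontact metric structure (Φ = dη = 2Σ dx^α ∧ dy_α), and its eigendistribution D⁺ = span(e_{n+α}) is involutive if and only if f satisfies f ∂f/∂x^α − ∂f/∂y_α + 2x^α ∂f/∂z = 0 for all α; moreover h e_α = 0, h e_{n+α} = −(∂f/∂z)e_α, so h² = 0 and h ≠ 0 iff ∂f/∂z ≠ 0. -/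

import Mathlib

noncomputable section

namespace Stmt17

open Finset

/-- Points (and tangent vectors) of ℝ^{2n+1} with coordinates `(x^α, y_α, z)`. -/
abbrev Pt (n : ℕ) := (Fin n → ℝ) × (Fin n → ℝ) × ℝ

/-- The coordinate vector `∂_{x^α}`. -/
def eaV (n : ℕ) (α : Fin n) : Pt n := ((Pi.single α 1 : Fin n → ℝ), 0, 0)

/-- The coordinate vector `∂_{y_α}`. -/
def eyV (n : ℕ) (α : Fin n) : Pt n := (0, (Pi.single α 1 : Fin n → ℝ), 0)

/-- The coordinate vector `∂_z`. -/
def dzV (n : ℕ) : Pt n := (0, 0, 1)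

/-- The frame fields `e_α = ∂_{x^α}`. -/
def eaF (n : ℕ) (α : Fin n) : Pt n → Pt n := fun _ => eaV n α

/-- The frame fields `e_{n+α} = −f ∂_{x^α} + ∂_{y_α} − 2x^α ∂_z`. -/
def enF (n : ℕ) (f : Pt n → ℝ) (α : Fin n) : Pt n → Pt n := fun p =>
  ((-(f p)) • (Pi.single α 1 : Fin n → ℝ), (Pi.single α 1 : Fin n → ℝ), -2 * p.1 α)

/-- `ξ = e_{2n+1} = ∂_z`. -/
def xiF (n : ℕ) : Pt n → Pt n := fun _ => dzV n

/-- `η = θ^{2n+1} = 2Σ x^ω dy_ω + dz`. -/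
def etaP (n : ℕ) (p v : Pt n) : ℝ := 2 * ∑ ω, p.1 ω * v.2.1 ω + v.2.2

/-- The dual coframe `θ^α = dx^α + f dy_α`. -/
def thA (n : ℕ) (f : Pt n → ℝ) (α : Fin n) (p v : Pt n) : ℝ := v.1 α + f p * v.2.1 α

/-- The dual coframe `θ^{n+α} = dy_α`. -/
def thB (n : ℕ) (α : Fin n) (v : Pt n) : ℝ := v.2.1 α

/-- The metric: `g(e_α, e_{n+α}) = g(e_{n+α}, e_α) = g(ξ, ξ) = 1`, all other
pairings of frame vectors zero. -/
def gP (n : ℕ) (f : Pt n → ℝ) (p v w : Pt n) : ℝ :=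
  (∑ α, (thA n f α p v * thB n α w + thB n α v * thA n f α p w)) + etaP n p v * etaP n p w

/-- `φ e_α = −e_α`, `φ e_{n+α} = e_{n+α}`, `φ ξ = 0`. -/
def phiP (n : ℕ) (f : Pt n → ℝ) (p v : Pt n) : Pt n :=
  (∑ α, thB n α v • enF n f α p) - (∑ α, thA n f α p v • eaV n α)

/-- Lie bracket of vector fields. -/
def brk (n : ℕ) (X Y : Pt n → Pt n) : Pt n → Pt n := fun p =>
  fderiv ℝ Y p (X p) - fderiv ℝ X p (Y p)

/-- `h = (1/2) L_ξ φ`. -/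
def htenP (n : ℕ) (f : Pt n → ℝ) (X : Pt n → Pt n) : Pt n → Pt n := fun p =>
  (1 / 2 : ℝ) • (brk n (xiF n) (fun q => phiP n f q (X q)) p - phiP n f p (brk n (xiF n) X p))

/-- The PDE system `f ∂f/∂x^α − ∂f/∂y_α + 2x^α ∂f/∂z = 0`. -/
def pde (n : ℕ) (f : Pt n → ℝ) (α : Fin n) (p : Pt n) : ℝ :=
  f p * fderiv ℝ f p (eaV n α) - fderiv ℝ f p (eyV n α) + 2 * p.1 α * fderiv ℝ f p (dzV n)


lemma phi_eq (n : ℕ) (f : Pt n → ℝ) (p v : Pt n) :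
    phiP n f p v = (-v.1 - (2 * f p) • v.2.1, v.2.1, -2 * ∑ ω, p.1 ω * v.2.1 ω) := by
  unfold phiP enF eaV thA thB
  refine Prod.ext ?_ (Prod.ext ?_ ?_)
  · simp only [Prod.fst_sum, Prod.fst_sub]
    funext i
    simp [Pi.single_apply, Finset.sum_ite_eq', mul_comm, Finset.mul_sum, smul_ite]
    ring
  · simp only [Prod.snd_sum, Prod.fst_sum, Prod.snd_sub, Prod.fst_sub]
    funext i
    simp [Pi.single_apply, Finset.sum_ite_eq']
  · simp only [Prod.snd_sum, Prod.snd_sub]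
    simp [smul_eq_mul, mul_comm, Finset.mul_sum]
    ring_nf

lemma eta_hasFDeriv (n : ℕ) (w p : Pt n) :
    HasFDerivAt (fun q : Pt n => etaP n q w)
      ((2:ℝ) • ∑ ω, (w.2.1 ω) •
        ((ContinuousLinearMap.proj ω : (Fin n → ℝ) →L[ℝ] ℝ).comp
          (ContinuousLinearMap.fst ℝ (Fin n → ℝ) ((Fin n → ℝ) × ℝ)))) p := by
  have h : (fun q : Pt n => etaP n q w) = fun q : Pt n =>
      ((2:ℝ) • ∑ ω, (w.2.1 ω) •
        ((ContinuousLinearMap.proj ω : (Fin n → ℝ) →L[ℝ] ℝ).comp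
          (ContinuousLinearMap.fst ℝ (Fin n → ℝ) ((Fin n → ℝ) × ℝ)))) q + w.2.2 := by
    funext q
    simp [etaP, Finset.mul_sum]
    exact Finset.sum_congr rfl fun i _ => by ring
  rw [h]
  exact (ContinuousLinearMap.hasFDerivAt _).add_const _

lemma eta_fderiv (n : ℕ) (w p v : Pt n) :
    fderiv ℝ (fun q : Pt n => etaP n q w) p v = 2 * ∑ ω, v.1 ω * w.2.1 ω := by
  rw [(eta_hasFDeriv n w p).fderiv]
  simp [Finset.mul_sum]
  exact Finset.sum_congr rfl fun i _ => by ring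

lemma enF_hasFDeriv (n : ℕ) (f : Pt n → ℝ) (hf : Differentiable ℝ f) (α : Fin n) (p : Pt n) :
    HasFDerivAt (enF n f α)
      (((-(fderiv ℝ f p)).smulRight (Pi.single α 1 : Fin n → ℝ)).prod
        ((0 : Pt n →L[ℝ] (Fin n → ℝ)).prod
          ((-2 : ℝ) • ((ContinuousLinearMap.proj α : (Fin n → ℝ) →L[ℝ] ℝ).comp
            (ContinuousLinearMap.fst ℝ (Fin n → ℝ) ((Fin n → ℝ) × ℝ)))))) p := by
  have c1 : HasFDerivAt (fun q : Pt n => (-(f q)) • (Pi.single α 1 : Fin n → ℝ))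
      ((-(fderiv ℝ f p)).smulRight (Pi.single α 1 : Fin n → ℝ)) p :=
    ((hf p).hasFDerivAt.neg).smul_const _
  have c2 : HasFDerivAt (fun _ : Pt n => (Pi.single α 1 : Fin n → ℝ))
      (0 : Pt n →L[ℝ] (Fin n → ℝ)) p := hasFDerivAt_const _ _
  have c3 : HasFDerivAt (fun q : Pt n => -2 * q.1 α)
      ((-2 : ℝ) • ((ContinuousLinearMap.proj α : (Fin n → ℝ) →L[ℝ] ℝ).comp
        (ContinuousLinearMap.fst ℝ (Fin n → ℝ) ((Fin n → ℝ) × ℝ)))) p := by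
    have h0 : HasFDerivAt (fun q : Pt n => q.1 α)
        ((ContinuousLinearMap.proj α : (Fin n → ℝ) →L[ℝ] ℝ).comp
          (ContinuousLinearMap.fst ℝ (Fin n → ℝ) ((Fin n → ℝ) × ℝ))) p := by
      exact ((ContinuousLinearMap.proj α : (Fin n → ℝ) →L[ℝ] ℝ).comp
        (ContinuousLinearMap.fst ℝ (Fin n → ℝ) ((Fin n → ℝ) × ℝ))).hasFDerivAt
    exact h0.const_mul (-2 : ℝ)
  exact c1.prodMk (c2.prodMk c3)

lemma enF_fderiv (n : ℕ) (f : Pt n → ℝ) (hf : Differentiable ℝ f) (α : Fin n) (p u : Pt n) :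
    fderiv ℝ (enF n f α) p u
      = ((-(fderiv ℝ f p u)) • (Pi.single α 1 : Fin n → ℝ), 0, -2 * u.1 α) := by
  rw [(enF_hasFDeriv n f hf α p).fderiv]
  simp

lemma enF_decomp (n : ℕ) (f : Pt n → ℝ) (α : Fin n) (p : Pt n) :
    enF n f α p = (-(f p)) • eaV n α + eyV n α + (-(2 * p.1 α)) • dzV n := by
  unfold enF eaV eyV dzV
  refine Prod.ext ?_ (Prod.ext ?_ ?_)
  · simp
  · simp
  · simp

lemma fderiv_f_en (n : ℕ) (f : Pt n → ℝ) (α : Fin n) (p : Pt n) :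
    fderiv ℝ f p (enF n f α p) = -(pde n f α p) := by
  rw [enF_decomp]
  simp [pde]
  ring

lemma brk_en (n : ℕ) (f : Pt n → ℝ) (hf : Differentiable ℝ f) (α β : Fin n) (p : Pt n) :
    brk n (enF n f α) (enF n f β) p
      = (pde n f α p • (Pi.single β 1 : Fin n → ℝ)
          - pde n f β p • (Pi.single α 1 : Fin n → ℝ), 0, 0) := by
  unfold brk
  rw [enF_fderiv n f hf β p (enF n f α p), enF_fderiv n f hf α p (enF n f β p),
    fderiv_f_en, fderiv_f_en]
  refine Prod.ext ?_ (Prod.ext ?_ ?_)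
  · simp
  · simp
  · show -2 * (enF n f α p).1 β - -2 * (enF n f β p).1 α = 0
    unfold enF
    simp [Pi.single_apply]
    rcases eq_or_ne β α with h | h
    · simp [h]
    · simp [h, h.symm]

lemma phi_zero (n : ℕ) (f : Pt n → ℝ) (p : Pt n) : phiP n f p 0 = 0 := by
  rw [phi_eq]; simp

lemma phi_ea (n : ℕ) (f : Pt n → ℝ) (p : Pt n) (c : ℝ) (α : Fin n) :
    phiP n f p (c • (Pi.single α 1 : Fin n → ℝ), 0, 0)
      = ((-c) • (Pi.single α 1 : Fin n → ℝ), 0, 0) := by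
  rw [phi_eq]; simp

lemma phi_en (n : ℕ) (f : Pt n → ℝ) (α : Fin n) (q : Pt n) :
    phiP n f q (enF n f α q) = enF n f α q := by
  rw [phi_eq]
  unfold enF
  refine Prod.ext ?_ (Prod.ext ?_ ?_)
  · funext i; simp [Pi.single_apply]; split <;> ring
  · simp
  · simp [Pi.single_apply, mul_comm, Finset.mul_sum]

lemma brk_xi (n : ℕ) (X : Pt n → Pt n) (p : Pt n) :
    brk n (xiF n) X p = fderiv ℝ X p (dzV n) := by
  unfold brk xiF
  simp

lemma hten_ea (n : ℕ) (f : Pt n → ℝ) (α : Fin n) (p : Pt n) :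
    htenP n f (eaF n α) p = 0 := by
  unfold htenP
  rw [brk_xi, brk_xi]
  have h1 : (fun q => phiP n f q (eaF n α q))
      = fun _ : Pt n => ((-1 : ℝ) • (Pi.single α 1 : Fin n → ℝ), (0 : Fin n → ℝ), (0:ℝ)) := by
    funext q
    have := phi_ea n f q 1 α
    simpa [eaF, eaV] using this
  rw [h1]
  have h2 : eaF n α = fun _ : Pt n => eaV n α := rfl
  rw [h2]
  simp [phi_zero]

lemma hten_xi (n : ℕ) (f : Pt n → ℝ) (p : Pt n) :
    htenP n f (xiF n) p = 0 := by
  unfold htenP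
  rw [brk_xi, brk_xi]
  have h1 : (fun q => phiP n f q (xiF n q)) = fun _ : Pt n => (0 : Pt n) := by
    funext q
    rw [show xiF n q = dzV n from rfl, phi_eq]
    simp [dzV]
  rw [h1]
  have h2 : xiF n = fun _ : Pt n => dzV n := rfl
  rw [h2]
  simp [phi_zero]

lemma hten_en (n : ℕ) (f : Pt n → ℝ) (hf : Differentiable ℝ f) (α : Fin n) (p : Pt n) :
    htenP n f (enF n f α) p = -(fderiv ℝ f p (dzV n)) • eaV n α := by
  unfold htenP
  rw [brk_xi, brk_xi]
  have h1 : (fun q => phiP n f q (enF n f α q)) = enF n f α := funext (phi_en n f α)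
  rw [h1, enF_fderiv n f hf α p (dzV n)]
  have h3 : (dzV n).1 α = 0 := rfl
  rw [h3]
  rw [show ((-(fderiv ℝ f p (dzV n))) • (Pi.single α 1 : Fin n → ℝ), (0 : Fin n → ℝ), (-2 * 0 : ℝ))
    = ((-(fderiv ℝ f p (dzV n))) • (Pi.single α 1 : Fin n → ℝ), (0 : Fin n → ℝ), (0:ℝ)) by norm_num,
    phi_ea]
  refine Prod.ext ?_ (Prod.ext ?_ ?_) <;> simp [eaV] <;> module

lemma hten_hten (n : ℕ) (f : Pt n → ℝ) (hf : ContDiff ℝ (⊤ : ℕ∞) f) (α : Fin n) (p : Pt n) :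
    htenP n f (htenP n f (enF n f α)) p = 0 := by
  have hdf : Differentiable ℝ f := hf.differentiable (by simp)
  set g : Pt n → ℝ := fun q => fderiv ℝ f q (dzV n) with hg
  have hgd : Differentiable ℝ g := by
    have h1 : Differentiable ℝ (fderiv ℝ f) :=
      (hf.fderiv_right (m := (⊤ : ℕ∞)) (by simp)).differentiable (by simp)
    exact h1.clm_apply (differentiable_const _)
  have hX : htenP n f (enF n f α) = fun q => (-(g q)) • eaV n α :=
    funext fun q => hten_en n f hdf α q
  rw [hX]
  unfold htenP
  rw [brk_xi, brk_xi]
  have hphiX : (fun q => phiP n f q ((fun q => (-(g q)) • eaV n α) q))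
      = fun q => (g q) • eaV n α := by
    funext q
    beta_reduce
    have : ((-(g q)) • eaV n α) = ((-(g q)) • (Pi.single α 1 : Fin n → ℝ), (0 : Fin n → ℝ), (0:ℝ)) := by
      refine Prod.ext ?_ (Prod.ext ?_ ?_) <;> simp [eaV]
    rw [this, phi_ea]
    refine Prod.ext ?_ (Prod.ext ?_ ?_) <;> simp [eaV]
  rw [hphiX]
  have hD1 : HasFDerivAt (fun q : Pt n => (g q) • eaV n α)
      ((fderiv ℝ g p).smulRight (eaV n α)) p := (hgd p).hasFDerivAt.smul_const _
  have hD2 : HasFDerivAt (fun q : Pt n => (-(g q)) • eaV n α)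
      ((-(fderiv ℝ g p)).smulRight (eaV n α)) p := ((hgd p).hasFDerivAt.neg).smul_const _
  rw [hD1.fderiv, hD2.fderiv]
  have ht : ((-(fderiv ℝ g p)).smulRight (eaV n α)) (dzV n)
      = ((-(fderiv ℝ g p (dzV n))) • (Pi.single α 1 : Fin n → ℝ), (0 : Fin n → ℝ), (0:ℝ)) := by
    refine Prod.ext ?_ (Prod.ext ?_ ?_) <;> simp [eaV]
  rw [ht, phi_ea]
  refine Prod.ext ?_ (Prod.ext ?_ ?_) <;> simp [eaV]

lemma L1 (n : ℕ) (f : Pt n → ℝ) (p v : Pt n) :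
    phiP n f p (phiP n f p v) = v - etaP n p v • dzV n := by
  rw [phi_eq, phi_eq]
  refine Prod.ext ?_ (Prod.ext ?_ ?_)
  · funext i; simp [etaP, dzV]
  · simp [etaP, dzV]
  · simp [etaP, dzV]

lemma L2 (n : ℕ) (p : Pt n) : etaP n p (dzV n) = 1 := by simp [etaP, dzV]

lemma L3 (n : ℕ) (f : Pt n → ℝ) (p : Pt n) : phiP n f p (dzV n) = 0 := by
  rw [phi_eq]; simp [dzV]

lemma L4 (n : ℕ) (f : Pt n → ℝ) (p v : Pt n) : etaP n p (phiP n f p v) = 0 := by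
  rw [phi_eq]; simp [etaP]

lemma L5 (n : ℕ) (f : Pt n → ℝ) (p v w : Pt n) :
    gP n f p (phiP n f p v) (phiP n f p w)
      = -(gP n f p v w) + etaP n p v * etaP n p w := by
  rw [phi_eq, phi_eq]
  simp only [gP, thA, thB, etaP, Pi.sub_apply, Pi.neg_apply, Pi.smul_apply, smul_eq_mul]
  rw [show (∑ α, ((-v.1 α - 2 * f p * v.2.1 α + f p * v.2.1 α) * w.2.1 α
        + v.2.1 α * (-w.1 α - 2 * f p * w.2.1 α + f p * w.2.1 α)))
      = -∑ α, ((v.1 α + f p * v.2.1 α) * w.2.1 α + v.2.1 α * (w.1 α + f p * w.2.1 α)) by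
    rw [← Finset.sum_neg_distrib]
    exact Finset.sum_congr rfl fun i _ => by ring]
  ring

lemma L6 (n : ℕ) (f : Pt n → ℝ) (p v w : Pt n) :
    gP n f p v (phiP n f p w)
      = (1 / 2) * (fderiv ℝ (fun q => etaP n q w) p v
          - fderiv ℝ (fun q => etaP n q v) p w) := by
  rw [phi_eq, eta_fderiv, eta_fderiv]
  simp only [gP, thA, thB, etaP, Pi.sub_apply, Pi.neg_apply, Pi.smul_apply, smul_eq_mul]
  rw [show (∑ α, ((v.1 α + f p * v.2.1 α) * w.2.1 α
        + v.2.1 α * (-w.1 α - 2 * f p * w.2.1 α + f p * w.2.1 α)))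
      = ∑ α, (v.1 α * w.2.1 α - v.2.1 α * w.1 α) by
    exact Finset.sum_congr rfl fun i _ => by ring]
  rw [Finset.sum_sub_distrib]
  rw [show (∑ ω, w.1 ω * v.2.1 ω) = ∑ ω, v.2.1 ω * w.1 ω from
    Finset.sum_congr rfl fun i _ => by ring]
  ring

lemma L7 (n : ℕ) (hn : 2 ≤ n) (f : Pt n → ℝ) (hf : Differentiable ℝ f) :
    (∀ (α β : Fin n) (p : Pt n),
        brk n (enF n f α) (enF n f β) p
          ∈ Submodule.span ℝ (Set.range fun γ : Fin n => enF n f γ p)) ↔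
      (∀ (α : Fin n) (p : Pt n), pde n f α p = 0) := by
  constructor
  · intro h α p
    obtain ⟨β, hβ⟩ : ∃ β : Fin n, β ≠ α := by
      rcases eq_or_ne α ⟨0, by omega⟩ with h0 | h0
      · exact ⟨⟨1, by omega⟩, by rw [h0]; intro hh; exact absurd (Fin.mk.injEq .. ▸ hh) (by simp)⟩
      · exact ⟨⟨0, by omega⟩, fun hh => h0 (hh ▸ rfl)⟩
    have hm := h α β p
    rw [Submodule.mem_span_range_iff_exists_fun] at hm
    obtain ⟨c, hc⟩ := hm
    rw [brk_en n f hf] at hc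
    have h2 : (∑ γ, c γ • enF n f γ p).2.1 = 0 := by rw [hc]
    have hc0 : ∀ γ, c γ = 0 := by
      intro γ
      have h3 := congrFun h2 γ
      simp only [Prod.snd_sum, Prod.fst_sum, Prod.smul_snd, Prod.smul_fst, enF] at h3
      simpa [Finset.sum_apply, Pi.single_apply, Finset.sum_ite_eq'] using h3
    have h4 : (∑ γ, c γ • enF n f γ p) = 0 := by
      rw [Finset.sum_eq_zero]
      intro γ _
      rw [hc0 γ, zero_smul]
    rw [h4] at hc
    have h5 := congrFun (congrArg (fun z : Pt n => z.1) hc.symm) β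
    simpa [Pi.single_apply, hβ, hβ.symm] using h5
  · intro h α β p
    rw [brk_en n f hf, h, h]
    simp
    exact Submodule.zero_mem _

lemma L12 (n : ℕ) (hn : 2 ≤ n) (f : Pt n → ℝ) (hf : Differentiable ℝ f) :
    (∃ α p, htenP n f (enF n f α) p ≠ 0) ↔ (∃ p, fderiv ℝ f p (dzV n) ≠ 0) := by
  constructor
  · rintro ⟨α, p, h⟩
    refine ⟨p, fun h0 => h ?_⟩
    rw [hten_en n f hf, h0]
    simp
  · rintro ⟨p, h0⟩
    refine ⟨⟨0, by omega⟩, p, ?_⟩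
    rw [hten_en n f hf]
    have hea : eaV n ⟨0, by omega⟩ ≠ 0 := by
      intro h
      have := congrFun (congrArg (fun z : Pt n => z.1) h) ⟨0, by omega⟩
      simp [eaV] at this
    exact smul_ne_zero (neg_ne_zero.mpr h0) hea
/-- for `n ≥ 2` and any smooth `f`, the above data is a
paracontact metric structure (`Φ = dη`); `D⁺ = span(e_{n+α})` is involutive iff
`f` solves the PDE system; and `h e_α = 0`, `h e_{n+α} = −(∂f/∂z) e_α`, so
`h² = 0` and `h ≠ 0` iff `∂f/∂z ≠ 0`. -/
theorem stmt17 (n : ℕ) (hn : 2 ≤ n) (f : Pt n → ℝ) (hf : ContDiff ℝ (⊤ : ℕ∞) f) :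
    -- almost paracontact metric structure
    (∀ p v, phiP n f p (phiP n f p v) = v - etaP n p v • dzV n) ∧
    (∀ p, etaP n p (dzV n) = 1) ∧
    (∀ p, phiP n f p (dzV n) = 0) ∧
    (∀ p v, etaP n p (phiP n f p v) = 0) ∧
    (∀ p v w, gP n f p (phiP n f p v) (phiP n f p w)
        = -(gP n f p v w) + etaP n p v * etaP n p w) ∧
    -- paracontact metric: Φ = dη (checked on constant vector fields)
    (∀ p (v w : Pt n), gP n f p v (phiP n f p w)
        = (1 / 2) * (fderiv ℝ (fun q => etaP n q w) p v
            - fderiv ℝ (fun q => etaP n q v) p w)) ∧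
    -- D⁺ is involutive iff f satisfies the PDE system
    ((∀ (α β : Fin n) (p : Pt n),
        brk n (enF n f α) (enF n f β) p
          ∈ Submodule.span ℝ (Set.range fun γ : Fin n => enF n f γ p)) ↔
      (∀ (α : Fin n) (p : Pt n), pde n f α p = 0)) ∧
    -- the tensor h
    (∀ α p, htenP n f (eaF n α) p = 0) ∧
    (∀ α p, htenP n f (enF n f α) p = -(fderiv ℝ f p (dzV n)) • eaV n α) ∧
    (∀ p, htenP n f (xiF n) p = 0) ∧
    (∀ α p, htenP n f (htenP n f (enF n f α)) p = 0) ∧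
    ((∃ α p, htenP n f (enF n f α) p ≠ 0) ↔ (∃ p, fderiv ℝ f p (dzV n) ≠ 0)) := by
  have hdf : Differentiable ℝ f := hf.differentiable (by simp)
  exact ⟨L1 n f, L2 n, L3 n f, L4 n f, L5 n f, L6 n f, L7 n hn f hdf, hten_ea n f,
    fun α p => hten_en n f hdf α p, hten_xi n f, hten_hten n f hf, L12 n hn f hdf⟩

end Stmt17
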